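/- arXiv:2512.09832 — 2 statements merged into one kernel-verified Lean document; each statement's English description precedes it below -/
import Mathlib

section
/- Let G be a finite simple graph that contains an induced cycle, and let m be the maximum n ≥ 3 such that cycleGraph n embeds into G. Let S be a set of natural numbers each strictly greater than m, and let D_S be the disjoint union of the cycle graphs C_s for s ∈ S. Then there is no graph embedding of G into D_S; that is, D_S is G-free. -/
/-!
Suppose `G ↪g D_S`. Composing with an induced `C_m` in `G` gives `C_m ↪g D_S`; since `C_m` is
connected, it lands in a single summand, so `C_m ↪g C_s` for some `s ∈ S`. An injective
homomorphism from a graph whose degrees dominate those of a connected target is surjective,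
because the image of a vertex's neighbourhood already fills the neighbourhood of its image.
Hence `s ≤ m`, contradicting `m < s`.
-/

open SimpleGraph

/-- The disjoint union of the cycle graphs `C_s` for `s ∈ S`: the simple graph on the sigma
type `Σ s : S, Fin s` in which two vertices are adjacent iff they lie in the same summand
`s` and are adjacent in `cycleGraph s`. -/
def cyclesDisjointUnion (S : Set ℕ) : SimpleGraph (Σ s : S, Fin (s : ℕ)) where
  Adj x y := ∃ h : (x.1 : ℕ) = (y.1 : ℕ), (cycleGraph (y.1 : ℕ)).Adj (Fin.cast h x.2) y.2
  symm := by
    constructor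
    rintro ⟨⟨s, hs⟩, i⟩ ⟨⟨t, ht⟩, j⟩ ⟨h, hadj⟩
    dsimp only at h
    subst h
    exact ⟨rfl, by simpa [Fin.ext_iff] using hadj.symm⟩
  loopless := by
    constructor
    rintro ⟨⟨s, hs⟩, i⟩ ⟨h, hadj⟩
    have : Fin.cast h i = i := by ext; rfl
    rw [this] at hadj
    exact SimpleGraph.irrefl _ hadj

namespace SimpleGraph

variable {V W : Type*} {G : SimpleGraph V} {H : SimpleGraph W}

theorem Reachable.mem_of_adj_mem {s : Set V} (hs : ∀ ⦃v w⦄, G.Adj v w → v ∈ s → w ∈ s)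
    {u v : V} (h : G.Reachable u v) (hu : u ∈ s) : v ∈ s := by
  rw [reachable_iff_reflTransGen] at h
  induction h with
  | refl => exact hu
  | tail _ hadj ih => exact hs hadj ih

theorem Hom.surjective_of_degree_le [G.LocallyFinite] [H.LocallyFinite] [Nonempty V]
    (hH : H.Preconnected) (f : G →g H) (hf : Function.Injective f)
    (hdeg : ∀ v, H.degree (f v) ≤ G.degree v) : Function.Surjective f := by
  have hclosed : ∀ ⦃w w'⦄, H.Adj w w' → w ∈ Set.range f → w' ∈ Set.range f := by
    rintro _ w' hadj ⟨v, rfl⟩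
    have hsub : (G.neighborFinset v).map ⟨f, hf⟩ ⊆ H.neighborFinset (f v) := by
      intro w hw
      obtain ⟨u, hu, rfl⟩ := Finset.mem_map.1 hw
      exact (mem_neighborFinset _ _ _).2 (f.map_adj ((mem_neighborFinset _ _ _).1 hu))
    have heq : (G.neighborFinset v).map ⟨f, hf⟩ = H.neighborFinset (f v) :=
      Finset.eq_of_subset_of_card_le hsub (by rw [Finset.card_map]; exact hdeg v)
    obtain ⟨u, -, rfl⟩ := Finset.mem_map.1 (heq ▸ (mem_neighborFinset _ _ _).2 hadj)
    exact ⟨u, rfl⟩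
  obtain ⟨v₀⟩ := ‹Nonempty V›
  exact fun w => (hH (f v₀) w).mem_of_adj_mem hclosed ⟨v₀, rfl⟩

end SimpleGraph

theorem le_of_cycleGraph_embedding {m n : ℕ} (hm : 3 ≤ m) (f : cycleGraph m ↪g cycleGraph n) :
    n ≤ m := by
  obtain ⟨k, rfl⟩ : ∃ k, m = k + 3 := ⟨m - 3, by omega⟩
  rcases Nat.lt_or_ge n 3 with hn | hn
  · omega
  obtain ⟨l, rfl⟩ : ∃ l, n = l + 3 := ⟨n - 3, by omega⟩
  have hsurj : Function.Surjective f :=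
    f.toHom.surjective_of_degree_le cycleGraph_preconnected f.injective fun _ => by
      rw [cycleGraph_degree_three_le, cycleGraph_degree_three_le]
  simpa using Fintype.card_le_of_surjective f hsurj

namespace cyclesDisjointUnion

variable {S : Set ℕ}

theorem adj_mk_iff {s : S} {i j : Fin s} :
    (cyclesDisjointUnion S).Adj ⟨s, i⟩ ⟨s, j⟩ ↔ (cycleGraph s).Adj i j :=
  ⟨fun ⟨_, h⟩ => h, fun h => ⟨rfl, h⟩⟩

theorem fst_eq_of_adj {x y : Σ s : S, Fin s} (h : (cyclesDisjointUnion S).Adj x y) :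
    x.1 = y.1 :=
  Subtype.ext h.1

theorem exists_embedding_cycleGraph {V : Type*} [Nonempty V] {G : SimpleGraph V}
    (hG : G.Preconnected) (f : G ↪g cyclesDisjointUnion S) :
    ∃ s ∈ S, Nonempty (G ↪g cycleGraph s) := by
  obtain ⟨v₀⟩ := ‹Nonempty V›
  set s := (f v₀).1
  have hfst (v : V) : (f v).1 = s :=
    (hG v₀ v).mem_of_adj_mem (s := {v | (f v).1 = s})
      (fun _ _ hadj hv => (fst_eq_of_adj (f.map_adj_iff.2 hadj)).symm.trans hv) rfl
  have hmk : ∀ (t : S) (x : Σ s : S, Fin s), x.1 = t → ∃ i, (⟨t, i⟩ : Σ s : S, Fin s) = x := by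
    rintro _ ⟨t, i⟩ rfl
    exact ⟨i, rfl⟩
  choose g hg using fun v => hmk s (f v) (hfst v)
  refine ⟨s, s.2, ⟨⟨⟨g, fun u v h => f.injective (by rw [← hg u, ← hg v, h])⟩, ?_⟩⟩⟩
  intro u v
  change (cycleGraph s).Adj (g u) (g v) ↔ G.Adj u v
  rw [← adj_mk_iff, hg, hg, f.map_adj_iff]

end cyclesDisjointUnion

theorem not_embedding_cyclesDisjointUnion_of_gt_max_cycle_general
    {α : Type*} (G : SimpleGraph α) (m : ℕ) (hm : 3 ≤ m)
    (hmem : Nonempty (cycleGraph m ↪g G))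
    (S : Set ℕ) (hS : ∀ s ∈ S, m < s) :
    ¬ Nonempty (G ↪g cyclesDisjointUnion S) := by
  rintro ⟨f⟩
  obtain ⟨c⟩ := hmem
  have : Nonempty (Fin m) := ⟨⟨0, by omega⟩⟩
  obtain ⟨s, hs, ⟨g⟩⟩ :=
    cyclesDisjointUnion.exists_embedding_cycleGraph cycleGraph_preconnected (f.comp c)
  exact (hS s hs).not_ge (le_of_cycleGraph_embedding hm g)

/-- Let `G` be a finite simple graph containing an induced cycle, and let
`m` be the maximal `n ≥ 3` such that `cycleGraph n` embeds into `G`. If every element of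
`S` is strictly greater than `m`, then `G` does not embed into the disjoint union `D_S` of
the cycles `C_s`, `s ∈ S`; i.e. `D_S` is `G`-free. -/
theorem not_embedding_cyclesDisjointUnion_of_gt_max_cycle
    {α : Type*} [Fintype α] (G : SimpleGraph α) (m : ℕ) (hm : 3 ≤ m)
    (hmem : Nonempty (cycleGraph m ↪g G))
    (hmax : ∀ n, 3 ≤ n → Nonempty (cycleGraph n ↪g G) → n ≤ m)
    (S : Set ℕ) (hS : ∀ s ∈ S, m < s) :
    ¬ Nonempty (G ↪g cyclesDisjointUnion S) :=
  not_embedding_cyclesDisjointUnion_of_gt_max_cycle_general G m hm hmem S hS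
end

section
/- Let G be a simple graph on a countable vertex type with no induced subgraph isomorphic to pathGraph 4 (a cograph), let u ≠ v be vertices, and suppose S is a strong module of G containing u and v that is contained in every strong module containing u and v (i.e., S is the least strong module containing u and v). Then for every vertex w, w ∈ S if and only if w ∈ M(u,v) or v ∉ M(u,w). -/
/-!
Write `Z` for the set of vertices `w` with `w ∈ M(u,v)` or `v ∉ M(u,w)`. If `v ∉ M(u,w)`, some
module contains `u` and `w` but not `v`; a strong module through `u` and `v` can neither contain
it nor be disjoint from it, so it contains `w`. Hence `Z ⊆ S`.

Conversely, the union `W` of all modules between `M(u,v)` and `Z` is a module inside `Z`. A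
module `D` that meets `W` without containing it still lies in `Z`: depending on which of `u`, `v`
lie in `D`, a module through `u` and a given point of `D` avoiding `v` is built from `D`, some
`M(u,x)` and the symmetric difference of two overlapping modules. So `W ∪ D` is again between
`M(u,v)` and `Z`, whence `D ⊆ W`. Thus `W` is strong and `S ⊆ W ⊆ Z`.
-/


open SimpleGraph

/-- A *module* of a simple graph `G` is a set `A` of vertices such that for all
`u, v ∈ A` and `w ∉ A`, `w` is adjacent to `u` iff `w` is adjacent to `v`. -/
def SimpleGraph.IsModule {V : Type*} (G : SimpleGraph V) (A : Set V) : Prop :=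
  ∀ u ∈ A, ∀ v ∈ A, ∀ w ∉ A, (G.Adj w u ↔ G.Adj w v)

/-- A module `A` is *strong* if every module `B` satisfies `A ⊆ B`, `B ⊆ A`, or
`A ∩ B = ∅`. -/
def SimpleGraph.IsStrongModule {V : Type*} (G : SimpleGraph V) (A : Set V) : Prop :=
  G.IsModule A ∧ ∀ B : Set V, G.IsModule B → A ⊆ B ∨ B ⊆ A ∨ A ∩ B = ∅

/-- `M(x,y)`: the intersection of all modules of `G` containing both `x` and `y`
(the least module containing `x` and `y`). -/
def SimpleGraph.minModule {V : Type*} (G : SimpleGraph V) (x y : V) : Set V :=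
  ⋂₀ {A : Set V | G.IsModule A ∧ x ∈ A ∧ y ∈ A}

open scoped symmDiff

namespace SimpleGraph

variable {V : Type*} {G : SimpleGraph V} {A B D F W : Set V} {u v x y d : V}

theorem isModule_sInter {𝒮 : Set (Set V)} (h : ∀ A ∈ 𝒮, G.IsModule A) :
    G.IsModule (⋂₀ 𝒮) := by
  intro a ha b hb z hz
  simp only [Set.mem_sInter, not_forall, exists_prop] at hz
  obtain ⟨A, hA, hzA⟩ := hz
  exact h A hA a (ha A hA) b (hb A hA) z hzA

theorem isModule_sUnion {𝒮 : Set (Set V)} (h : ∀ A ∈ 𝒮, G.IsModule A)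
    (hx : ∀ A ∈ 𝒮, x ∈ A) : G.IsModule (⋃₀ 𝒮) := by
  intro a ha b hb z hz
  have adj_iff : ∀ c ∈ ⋃₀ 𝒮, G.Adj z c ↔ G.Adj z x := by
    rintro c ⟨A, hA, hcA⟩
    exact h A hA c hcA x (hx A hA) z fun hzA => hz ⟨A, hA, hzA⟩
  exact (adj_iff a ha).trans (adj_iff b hb).symm

theorem IsModule.union (hA : G.IsModule A) (hB : G.IsModule B) (hxA : x ∈ A) (hxB : x ∈ B) :
    G.IsModule (A ∪ B) := by
  rw [← Set.sUnion_pair]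
  exact isModule_sUnion (x := x) (by rintro _ (rfl | rfl) <;> assumption)
    (by rintro _ (rfl | rfl) <;> assumption)

theorem IsModule.adj_iff_of_mem_inter (hA : G.IsModule A) (hB : G.IsModule B) {z c a b : V}
    (hz : z ∈ A ∩ B) (hc : c ∈ A \ B) (ha : a ∈ A) (hb : b ∈ B \ A) :
    G.Adj z c ↔ G.Adj a b := by
  rw [G.adj_comm z c, hB z hz.2 b hb.1 c hc.2, G.adj_comm c b, hA c hc.1 a ha b hb.2,
    G.adj_comm b a]

theorem IsModule.diff (hA : G.IsModule A) (hB : G.IsModule B) (hd : d ∈ B \ A) :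
    G.IsModule (A \ B) := by
  intro a ha b hb z hz
  by_cases hzA : z ∈ A
  · have hz : z ∈ A ∩ B := ⟨hzA, by_contra fun hzB => hz ⟨hzA, hzB⟩⟩
    rw [hA.adj_iff_of_mem_inter hB hz ha ha.1 hd, hA.adj_iff_of_mem_inter hB hz hb ha.1 hd]
  · exact hA a ha.1 b hb.1 z hzA

theorem IsModule.symmDiff (hA : G.IsModule A) (hB : G.IsModule B) {p a b : V}
    (hp : p ∈ A ∩ B) (ha : a ∈ A \ B) (hb : b ∈ B \ A) : G.IsModule (A ∆ B) := by
  intro x hx y hy z hz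
  by_cases hzAB : z ∈ A ∩ B
  · have adj_iff : ∀ c ∈ A ∆ B, G.Adj z c ↔ G.Adj a b := by
      rintro c (hc | hc)
      · exact hA.adj_iff_of_mem_inter hB hzAB hc ha.1 hb
      · rw [hB.adj_iff_of_mem_inter hA hzAB.symm hc hb.1 ha, G.adj_comm]
    exact (adj_iff x hx).trans (adj_iff y hy).symm
  · have hz : z ∉ A ∪ B := by
      rintro (hzA | hzB)
      · exact hz (Or.inl ⟨hzA, fun hzB => hzAB ⟨hzA, hzB⟩⟩)
      · exact hz (Or.inr ⟨hzB, fun hzA => hzAB ⟨hzA, hzB⟩⟩)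
    exact (hA.union hB hp.1 hp.2) x (Set.symmDiff_subset_union hx) y
      (Set.symmDiff_subset_union hy) z hz

theorem IsModule.isStrongModule_of_forall (hW : G.IsModule W)
    (h : ∀ D, G.IsModule D → (W ∩ D).Nonempty → ¬ W ⊆ D → D ⊆ W) :
    G.IsStrongModule W := by
  refine ⟨hW, fun D hD => ?_⟩
  by_cases hWD : W ⊆ D
  · exact Or.inl hWD
  rcases (W ∩ D).eq_empty_or_nonempty with h₀ | h₀
  · exact Or.inr (Or.inr h₀)
  · exact Or.inr (Or.inl (h D hD h₀ hWD))

theorem isModule_minModule (x y : V) : G.IsModule (G.minModule x y) :=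
  isModule_sInter fun _ hA => hA.1

theorem left_mem_minModule (x y : V) : x ∈ G.minModule x y :=
  Set.mem_sInter.mpr fun _ hA => hA.2.1

theorem right_mem_minModule (x y : V) : y ∈ G.minModule x y :=
  Set.mem_sInter.mpr fun _ hA => hA.2.2

theorem minModule_subset (hD : G.IsModule D) (hx : x ∈ D) (hy : y ∈ D) :
    G.minModule x y ⊆ D :=
  Set.sInter_subset_of_mem ⟨hD, hx, hy⟩

theorem notMem_minModule_of_isModule (hF : G.IsModule F) (hu : u ∈ F) (hd : d ∈ F)
    (hv : v ∉ F) : v ∉ G.minModule u d :=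
  fun h => hv (minModule_subset hF hu hd h)

theorem notMem_minModule_of_notMem_minModule (hx : v ∉ G.minModule u x) (hF : G.IsModule F)
    (hxF : x ∈ F) (hd : d ∈ F) (hv : v ∉ F) : v ∉ G.minModule u d := by
  refine notMem_minModule_of_isModule ((isModule_minModule u x).union hF
    (right_mem_minModule u x) hxF) (Or.inl (left_mem_minModule u x)) (Or.inr hd) ?_
  rintro (h | h)
  exacts [hx h, hv h]

theorem IsStrongModule.mem_of_notMem_minModule {S : Set V} (hS : G.IsStrongModule S)
    (huS : u ∈ S) (hvS : v ∈ S) (hv : v ∉ G.minModule u x) : x ∈ S := by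
  by_contra hxS
  refine hv (Set.mem_sInter.mpr fun D ⟨hD, huD, hxD⟩ => ?_)
  rcases hS.2 D hD with hSD | hDS | hSD
  · exact hSD hvS
  · exact absurd (hDS hxD) hxS
  · exact (hSD.subset ⟨huS, huD⟩).elim

theorem mem_minModule_or_notMem_of_overlap (hW : G.IsModule W)
    (hWZ : ∀ z ∈ W, z ∈ G.minModule u v ∨ v ∉ G.minModule u z) (hvW : v ∈ W)
    (hD : G.IsModule D) (hx : x ∈ W ∩ D) (hy : y ∈ W \ D) (hd : d ∈ D) :
    d ∈ G.minModule u v ∨ v ∉ G.minModule u d := by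
  set A := G.minModule u v
  have hA : G.IsModule A := isModule_minModule u v
  by_cases hdA : d ∈ A
  · exact Or.inl hdA
  by_cases hdW : d ∈ W
  · exact hWZ d hdW
  refine Or.inr ?_
  by_cases huD : u ∈ D <;> by_cases hvD : v ∈ D
  · have hyA : y ∉ A := fun h => hy.2 (minModule_subset hD huD hvD h)
    exact notMem_minModule_of_notMem_minModule ((hWZ y hy.1).resolve_left hyA)
      (hW.symmDiff hD hx hy ⟨hd, hdW⟩) (Or.inl hy) (Or.inr ⟨hd, hdW⟩)
      (by rintro (h | h); exacts [h.2 hvD, h.2 hvW])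
  · exact notMem_minModule_of_isModule hD huD hd hvD
  · exact notMem_minModule_of_isModule
      (hA.symmDiff hD ⟨right_mem_minModule u v, hvD⟩ ⟨left_mem_minModule u v, huD⟩
        ⟨hd, hdA⟩)
      (Or.inl ⟨left_mem_minModule u v, huD⟩) (Or.inr ⟨hd, hdA⟩)
      (by rintro (h | h); exacts [h.2 hvD, h.2 (right_mem_minModule u v)])
  · -- `A \ D` is a module containing `u` and `v`, so `A` misses `D`
    have hxA : x ∉ A := fun h =>
      (minModule_subset (hA.diff hD ⟨hd, hdA⟩) ⟨left_mem_minModule u v, huD⟩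
        ⟨right_mem_minModule u v, hvD⟩ h).2 hx.2
    exact notMem_minModule_of_notMem_minModule ((hWZ x hx.1).resolve_left hxA) hD hx.2 hd hvD

theorem exists_isStrongModule_forall_mem_minModule_or_notMem (u v : V) :
    ∃ W, G.IsStrongModule W ∧ u ∈ W ∧ v ∈ W ∧
      ∀ w ∈ W, w ∈ G.minModule u v ∨ v ∉ G.minModule u w := by
  set 𝒴 := {Y | G.IsModule Y ∧ G.minModule u v ⊆ Y ∧
    ∀ w ∈ Y, w ∈ G.minModule u v ∨ v ∉ G.minModule u w}
  have hA𝒴 : G.minModule u v ∈ 𝒴 :=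
    ⟨isModule_minModule u v, subset_rfl, fun _ => Or.inl⟩
  have hW : G.IsModule (⋃₀ 𝒴) :=
    isModule_sUnion (fun _ hY => hY.1) fun _ hY => hY.2.1 (left_mem_minModule u v)
  have hWZ : ∀ w ∈ ⋃₀ 𝒴, w ∈ G.minModule u v ∨ v ∉ G.minModule u w :=
    fun w ⟨Y, hY, hwY⟩ => hY.2.2 w hwY
  have hvW : v ∈ ⋃₀ 𝒴 := ⟨_, hA𝒴, right_mem_minModule u v⟩
  refine ⟨⋃₀ 𝒴, hW.isStrongModule_of_forall fun D hD ⟨x, hx⟩ hWD => ?_,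
    ⟨_, hA𝒴, left_mem_minModule u v⟩, hvW, hWZ⟩
  obtain ⟨y, hy⟩ := Set.not_subset.mp hWD
  have hWD𝒴 : ⋃₀ 𝒴 ∪ D ∈ 𝒴 := by
    refine ⟨hW.union hD hx.1 hx.2, fun a ha => Or.inl ⟨_, hA𝒴, ha⟩, ?_⟩
    rintro w (hw | hw)
    exacts [hWZ w hw, mem_minModule_or_notMem_of_overlap hW hWZ hvW hD hx hy hw]
  exact fun d hd => ⟨_, hWD𝒴, Or.inr hd⟩

end SimpleGraph

theorem mem_least_strongModule_iff_of_p4Free_general {V : Type*}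
    (G : SimpleGraph V)
    (u v : V) (S : Set V)
    (hS : G.IsStrongModule S) (huS : u ∈ S) (hvS : v ∈ S)
    (hleast : ∀ B : Set V, G.IsStrongModule B → u ∈ B → v ∈ B → S ⊆ B)
    (w : V) :
    w ∈ S ↔ w ∈ G.minModule u v ∨ v ∉ G.minModule u w := by
  refine ⟨fun hwS => ?_, ?_⟩
  · obtain ⟨W, hW, huW, hvW, hWZ⟩ :=
      exists_isStrongModule_forall_mem_minModule_or_notMem (G := G) u v
    exact hWZ w (hleast W hW huW hvW hwS)
  · rintro (hw | hw)
    · exact minModule_subset hS.1 huS hvS hw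
    · exact hS.mem_of_notMem_minModule huS hvS hw

/-- Let `G` be a cograph (a `pathGraph 4`-free simple graph) on a
countable vertex type, `u ≠ v` vertices, and `S` the least strong module of `G`
containing `u` and `v`. Then `w ∈ S` iff `w ∈ M(u,v)` or `v ∉ M(u,w)`. -/
theorem mem_least_strongModule_iff_of_p4Free {V : Type*} [Countable V]
    (G : SimpleGraph V) (hfree : ¬ Nonempty (pathGraph 4 ↪g G))
    (u v : V) (huv : u ≠ v) (S : Set V)
    (hS : G.IsStrongModule S) (huS : u ∈ S) (hvS : v ∈ S)
    (hleast : ∀ B : Set V, G.IsStrongModule B → u ∈ B → v ∈ B → S ⊆ B)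
    (w : V) :
    w ∈ S ↔ w ∈ G.minModule u v ∨ v ∉ G.minModule u w :=
  mem_least_strongModule_iff_of_p4Free_general G u v S hS huS hvS hleast w
end
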